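/- Let A be a pseudo-hoop. Then A is a Wajsberg pseudo-hoop if and only if for all x, y ∈ A with x ≤ y, one has y = (x→y)⇝y and y = (x⇝y)→y. -/

import Mathlib

universe u v

class PseudoHoop (A : Type u) extends One A, Mul A where
  rimp : A → A → A
  limp : A → A → A
  mul_one' : ∀ x : A, x * 1 = x
  one_mul' : ∀ x : A, 1 * x = x
  rimp_self : ∀ x : A, rimp x x = 1
  limp_self : ∀ x : A, limp x x = 1
  mul_rimp : ∀ x y z : A, rimp (x * y) z = rimp x (rimp y z)
  mul_limp : ∀ x y z : A, limp (x * y) z = limp y (limp x z)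
  div₁ : ∀ x y : A, (rimp x y) * x = (rimp y x) * y
  div₂ : ∀ x y : A, (rimp x y) * x = x * (limp x y)
  div₃ : ∀ x y : A, x * (limp x y) = y * (limp y x)

namespace PseudoHoop

/-- The order on a pseudo-hoop: `x ≤ y` iff `x → y = 1`. -/
def ple {A : Type u} [PseudoHoop A] (x y : A) : Prop := rimp x y = 1

/-- The meet `x ∧ y = (x → y) ⊙ x`. -/
def meet {A : Type u} [PseudoHoop A] (x y : A) : A := (rimp x y) * x

/-- `x ∨₁ y = (x → y) ⇝ y`. -/
def join₁ {A : Type u} [PseudoHoop A] (x y : A) : A := limp (rimp x y) y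

/-- `x ∨₂ y = (x ⇝ y) → y`. -/
def join₂ {A : Type u} [PseudoHoop A] (x y : A) : A := rimp (limp x y) y

/-- Iterated implication: `x →⁰ y = y`, `x →ⁿ⁺¹ y = x → (x →ⁿ y)`. -/
def rimpPow {A : Type u} [PseudoHoop A] (x : A) : ℕ → A → A
  | 0, y => y
  | n + 1, y => rimp x (rimpPow x n y)

/-- A filter of a pseudo-hoop. -/
structure IsFilter {A : Type u} [PseudoHoop A] (F : Set A) : Prop where
  nonempty : F.Nonempty
  mul_mem : ∀ {x y : A}, x ∈ F → y ∈ F → x * y ∈ F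
  upward : ∀ {x y : A}, x ∈ F → ple x y → y ∈ F

/-- A normal filter: `x → y ∈ F` iff `x ⇝ y ∈ F`. -/
def IsNormalFilter {A : Type u} [PseudoHoop A] (F : Set A) : Prop :=
  IsFilter F ∧ ∀ x y : A, rimp x y ∈ F ↔ limp x y ∈ F

def IsProper {A : Type u} [PseudoHoop A] (F : Set A) : Prop := F ≠ Set.univ

/-- A pseudo-hoop is simple if `{1}` is its unique proper filter. -/
def IsSimple (A : Type u) [PseudoHoop A] : Prop :=
  ∀ F : Set A, IsFilter F → IsProper F → F = {1}

/-- A pseudo-hoop is Wajsberg if `x ∨₁ y = y ∨₁ x` and `x ∨₂ y = y ∨₂ x`. -/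
def IsWajsberg (A : Type u) [PseudoHoop A] : Prop :=
  ∀ x y : A, join₁ x y = join₁ y x ∧ join₂ x y = join₂ y x

/-- A fantastic filter. -/
def IsFantasticFilter {A : Type u} [PseudoHoop A] (F : Set A) : Prop :=
  IsFilter F ∧ ∀ x y : A,
    (rimp y x ∈ F → rimp (join₁ x y) x ∈ F) ∧
    (limp y x ∈ F → limp (join₂ x y) x ∈ F)

def IS₂ {A : Type u} [PseudoHoop A] (μ : A → A) : Prop :=
  ∀ x y : A, μ (x * y) = μ x * μ (limp x (x * y)) ∧
    μ (x * y) = μ (rimp y (x * y)) * μ y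

def IS₃ {A : Type u} [PseudoHoop A] (μ : A → A) : Prop :=
  ∀ x y : A, μ (μ x * μ y) = μ x * μ y

def IS₄ {A : Type u} [PseudoHoop A] (μ : A → A) : Prop :=
  ∀ x y : A, μ (rimp (μ x) (μ y)) = rimp (μ x) (μ y) ∧
    μ (limp (μ x) (μ y)) = limp (μ x) (μ y)

/-- Type I state operator. -/
def IsStateI {A : Type u} [PseudoHoop A] (μ : A → A) : Prop :=
  (∀ x y : A, μ (rimp x y) = rimp (μ (join₁ x y)) (μ y) ∧
      μ (limp x y) = limp (μ (join₂ x y)) (μ y)) ∧ IS₂ μ ∧ IS₃ μ ∧ IS₄ μ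

/-- Type II state operator. -/
def IsStateII {A : Type u} [PseudoHoop A] (μ : A → A) : Prop :=
  (∀ x y : A, μ (rimp x y) = rimp (μ (join₁ y x)) (μ y) ∧
      μ (limp x y) = limp (μ (join₂ y x)) (μ y)) ∧ IS₂ μ ∧ IS₃ μ ∧ IS₄ μ

/-- Type III state operator. -/
def IsStateIII {A : Type u} [PseudoHoop A] (μ : A → A) : Prop :=
  (∀ x y : A, μ (rimp x y) = rimp (μ x) (μ (meet x y)) ∧
      μ (limp x y) = limp (μ x) (μ (meet x y))) ∧ IS₂ μ ∧ IS₃ μ ∧ IS₄ μ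

end PseudoHoop

open PseudoHoop

/-- A bounded pseudo-hoop: a pseudo-hoop with a least element `0`. -/
class BoundedPseudoHoop (A : Type u) extends PseudoHoop A, Zero A where
  zero_le : ∀ x : A, rimp 0 x = 1

namespace BoundedPseudoHoop

/-- `x⁻ = x → 0`. -/
def negr {A : Type u} [BoundedPseudoHoop A] (x : A) : A := rimp x 0

/-- `x∼ = x ⇝ 0`. -/
def negl {A : Type u} [BoundedPseudoHoop A] (x : A) : A := limp x 0

/-- A bounded pseudo-hoop is good if `x⁻∼ = x∼⁻` for all `x`. -/
def IsGood (A : Type u) [BoundedPseudoHoop A] : Prop :=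
  ∀ x : A, negl (negr x) = negr (negl x)

/-- A bounded pseudo-hoop is involutive if `x⁻∼ = x∼⁻ = x` for all `x`. -/
def IsInvolutive (A : Type u) [BoundedPseudoHoop A] : Prop :=
  ∀ x : A, negl (negr x) = x ∧ negr (negl x) = x

/-- The set of dense elements. -/
def Den (A : Type u) [BoundedPseudoHoop A] : Set A :=
  {x : A | negl (negr x) = 1}

/-- An involutive filter: `x⁻∼ → x ∈ F` and `x∼⁻ ⇝ x ∈ F` for all `x`. -/
def IsInvolutiveFilter {A : Type u} [BoundedPseudoHoop A] (F : Set A) : Prop :=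
  IsFilter F ∧ ∀ x : A, rimp (negl (negr x)) x ∈ F ∧ limp (negr (negl x)) x ∈ F

end BoundedPseudoHoop

open BoundedPseudoHoop

/-!
Both joins are upper bounds of their arguments and are monotone in the first argument.
If every `u` absorbs the elements below it (`x ≤ u → u ∨₁ x = u`), take `u = x ∨₁ y`: since
`y ≤ u`, we get `y ∨₁ x ≤ u ∨₁ x = u = x ∨₁ y`, and by symmetry the two joins coincide; the
same argument works for `∨₂`. Conversely, `x ≤ y` means `x → y = 1`, so `x ∨₁ y = 1 ⇝ y = y`,
and in a Wajsberg pseudo-hoop `y ∨₁ x = x ∨₁ y`.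
-/

namespace PseudoHoop

variable {A : Type u} [PseudoHoop A]

theorem ple_antisymm {x y : A} (hxy : ple x y) (hyx : ple y x) : x = y := by
  have h := div₁ x y
  rwa [hxy, hyx, one_mul', one_mul'] at h

theorem rimp_mul_self_ple (x y : A) : ple (rimp x y * x) y := by
  rw [ple, mul_rimp, rimp_self]

theorem limp_mul_limp_self_eq_one (x y : A) : limp (x * limp x y) y = 1 := by
  rw [mul_limp, limp_self]

theorem one_rimp_eq_rimp_one_mul (x : A) : rimp 1 x = rimp x 1 * x := by
  simpa only [mul_one'] using (div₁ x 1).symm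

theorem rimp_rimp_one_one (x : A) : rimp (rimp x 1) (1 : A) = 1 := by
  have h : rimp (rimp x 1) 1 * rimp x 1 = rimp x (1 : A) := by
    rw [← one_rimp_eq_rimp_one_mul, ← mul_rimp, one_mul']
  have hle := rimp_mul_self_ple (rimp x 1) (1 : A)
  rwa [h] at hle

theorem one_rimp (x : A) : rimp 1 x = x := by
  refine ple_antisymm ?_ ?_
  · rw [ple, one_rimp_eq_rimp_one_mul, mul_rimp, rimp_self, rimp_rimp_one_one]
  · rw [ple, ← mul_rimp, mul_one', rimp_self]

theorem rimp_one (x : A) : rimp x (1 : A) = 1 := by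
  have h : rimp x 1 * x = x := by rw [← one_rimp_eq_rimp_one_mul, one_rimp]
  have hle := rimp_mul_self_ple x (1 : A)
  rwa [h] at hle

theorem one_limp (x : A) : limp 1 x = x := by
  have h := div₂ x 1
  rw [rimp_one, one_mul', div₃, one_mul'] at h
  exact h.symm

theorem limp_one (x : A) : limp x (1 : A) = 1 := by
  have h : x * limp x 1 = x := by rw [div₃, one_mul', one_limp]
  have hle := limp_mul_limp_self_eq_one x (1 : A)
  rwa [h] at hle

theorem limp_eq_one_iff_ple {x y : A} : limp x y = 1 ↔ ple x y := by
  constructor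
  · intro h
    simpa only [div₂, h, mul_one'] using rimp_mul_self_ple x y
  · intro h
    have hle := limp_mul_limp_self_eq_one x y
    rwa [← div₂, h, one_mul'] at hle

theorem mul_limp_self_ple (x y : A) : ple (x * limp x y) y :=
  limp_eq_one_iff_ple.1 (limp_mul_limp_self_eq_one x y)

theorem ple_trans {x y z : A} (hxy : ple x y) (hyz : ple y z) : ple x z := by
  have hx : x = rimp y x * y := by rw [← div₁, hxy, one_mul']
  rw [ple, hx, mul_rimp, hyz, rimp_one]

theorem mul_ple_left (x y : A) : ple (x * y) x := by
  rw [← limp_eq_one_iff_ple, mul_limp, limp_self, limp_one]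

theorem mul_ple_right (x y : A) : ple (x * y) y := by
  rw [ple, mul_rimp, rimp_self, rimp_one]

theorem mul_ple_mul_left {x y : A} (u : A) (h : ple x y) : ple (u * x) (u * y) := by
  have hy : ple y (limp u (u * y)) := by
    rw [← limp_eq_one_iff_ple, ← mul_limp, limp_self]
  rw [← limp_eq_one_iff_ple, mul_limp, limp_eq_one_iff_ple]
  exact ple_trans h hy

theorem mul_ple_mul_right {x y : A} (u : A) (h : ple x y) : ple (x * u) (y * u) := by
  have hy : ple y (rimp u (y * u)) := by
    rw [ple, ← mul_rimp, rimp_self]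
  rw [ple, mul_rimp]
  exact ple_trans h hy

theorem rimp_ple_rimp_of_ple {x y : A} (z : A) (h : ple x y) : ple (rimp y z) (rimp x z) := by
  rw [ple, ← mul_rimp]
  exact ple_trans (mul_ple_mul_left _ h) (rimp_mul_self_ple y z)

theorem limp_ple_limp_of_ple {x y : A} (z : A) (h : ple x y) : ple (limp y z) (limp x z) := by
  rw [← limp_eq_one_iff_ple, ← mul_limp, limp_eq_one_iff_ple]
  exact ple_trans (mul_ple_mul_right _ h) (mul_limp_self_ple y z)

theorem ple_join₁_left (x y : A) : ple x (join₁ x y) := by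
  rw [← limp_eq_one_iff_ple, join₁, ← mul_limp, div₂, limp_mul_limp_self_eq_one]

theorem ple_join₁_right (x y : A) : ple y (join₁ x y) := by
  rw [← limp_eq_one_iff_ple, join₁, ← mul_limp, limp_eq_one_iff_ple]
  exact mul_ple_right _ _

theorem ple_join₂_left (x y : A) : ple x (join₂ x y) := by
  rw [ple, join₂, ← mul_rimp, ← div₂]
  exact rimp_mul_self_ple x y

theorem ple_join₂_right (x y : A) : ple y (join₂ x y) := by
  rw [ple, join₂, ← mul_rimp]
  exact mul_ple_left _ _

theorem join₁_mono_left {x y : A} (z : A) (h : ple x y) : ple (join₁ x z) (join₁ y z) :=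
  limp_ple_limp_of_ple z (rimp_ple_rimp_of_ple z h)

theorem join₂_mono_left {x y : A} (z : A) (h : ple x y) : ple (join₂ x z) (join₂ y z) :=
  rimp_ple_rimp_of_ple z (limp_ple_limp_of_ple z h)

theorem join₁_eq_of_ple {x y : A} (h : ple x y) : join₁ x y = y := by
  rw [join₁, h, one_limp]

theorem join₂_eq_of_ple {x y : A} (h : ple x y) : join₂ x y = y := by
  rw [join₂, limp_eq_one_iff_ple.2 h, one_rimp]

theorem join₁_comm_of_absorb (H : ∀ x y : A, ple x y → y = join₁ y x) (x y : A) :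
    join₁ x y = join₁ y x := by
  have key : ∀ x y : A, ple (join₁ y x) (join₁ x y) := fun x y => by
    have h := join₁_mono_left x (ple_join₁_right x y)
    rwa [← H x _ (ple_join₁_left x y)] at h
  exact ple_antisymm (key y x) (key x y)

theorem join₂_comm_of_absorb (H : ∀ x y : A, ple x y → y = join₂ y x) (x y : A) :
    join₂ x y = join₂ y x := by
  have key : ∀ x y : A, ple (join₂ y x) (join₂ x y) := fun x y => by
    have h := join₂_mono_left x (ple_join₂_right x y)
    rwa [← H x _ (ple_join₂_left x y)] at h
  exact ple_antisymm (key y x) (key x y)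

end PseudoHoop

theorem stmt6 {A : Type u} [PseudoHoop A] :
    IsWajsberg A ↔ ∀ x y : A, ple x y → (y = join₁ y x ∧ y = join₂ y x) := by
  constructor
  · intro hW x y hxy
    exact ⟨((hW y x).1.trans (join₁_eq_of_ple hxy)).symm,
      ((hW y x).2.trans (join₂_eq_of_ple hxy)).symm⟩
  · intro H x y
    exact ⟨join₁_comm_of_absorb (fun x y h => (H x y h).1) x y,
      join₂_comm_of_absorb (fun x y h => (H x y h).2) x y⟩
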